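/- Let D₁ ∈ B(X₁), D₂ ∈ B(X₂) be operators on Banach spaces such that D₂ is right invertible, R(D₁) is closed, N(D₁) is complemented, and there exists a left invertible bounded operator from X₁/R(D₁) (identified with a topological complement of R(D₁)) into N(D₂). Then there exists A ∈ B(X₂, X₁) such that the operator matrix [[D₁, A],[0, D₂]] is right invertible on X₁ ⊕ X₂. -/

import Mathlib

/-!
Let `P` be the projection onto `R(D₁)` along `W`. Since `N(D₁)` is complemented, the open
mapping theorem gives a bounded `G` with `D₁ G = P`. Let `S₀` be a right inverse of `D₂` and
`π = I - S₀ D₂` the projection onto `N(D₂)` along `R(S₀)`. With `A = J' π` and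
`S = [[G, 0], [J (I - P), S₀]]` we get `D₁ G + A J (I - P) = P + (I - P) = I`, `D₂ J = 0`,
`D₂ S₀ = I`, and `A S₀ = 0` because `π S₀ = 0`.
-/

open ContinuousLinearMap in
/-- The upper triangular operator matrix `[[D₁, A],[0, D₂]]` acting on `X₁ × X₂`. -/
noncomputable def upperTriangular {X₁ X₂ : Type*} [NormedAddCommGroup X₁] [NormedAddCommGroup X₂]
    [NormedSpace ℂ X₁] [NormedSpace ℂ X₂]
    (D₁ : X₁ →L[ℂ] X₁) (D₂ : X₂ →L[ℂ] X₂) (A : X₂ →L[ℂ] X₁) :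
    (X₁ × X₂) →L[ℂ] (X₁ × X₂) :=
  (D₁.comp (fst ℂ X₁ X₂) + A.comp (snd ℂ X₁ X₂)).prod (D₂.comp (snd ℂ X₁ X₂))

variable {X₁ X₂ : Type*} [NormedAddCommGroup X₁] [NormedSpace ℂ X₁] [CompleteSpace X₁]
  [NormedAddCommGroup X₂] [NormedSpace ℂ X₂] [CompleteSpace X₂]

open Function ContinuousLinearMap Submodule

section RightInverse

variable {𝕜 E F : Type*} [NontriviallyNormedField 𝕜] [NormedAddCommGroup E] [NormedSpace 𝕜 E]
  [CompleteSpace E] [NormedAddCommGroup F] [NormedSpace 𝕜 F] [CompleteSpace F]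

theorem ContinuousLinearMap.HasRightInverse.of_surjective_of_closedComplemented_ker
    {f : E →L[𝕜] F} (hf : Surjective f) (hker : f.ker.ClosedComplemented) :
    f.HasRightInverse := by
  obtain ⟨P, hP⟩ := hker
  have := f.isClosed_ker.completeSpace_coe
  let e := equivProdOfSurjectiveOfIsCompl f P (LinearMap.range_eq_top.mpr hf)
    (LinearMap.range_eq_top.mpr fun x => ⟨x, hP x⟩) (isTopCompl_of_proj hP).isCompl
  refine ⟨e.symm ∘L inl 𝕜 F f.ker, fun y => ?_⟩
  exact congr_arg Prod.fst (e.apply_symm_apply (y, 0))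

theorem ContinuousLinearMap.exists_comp_eq_projectionL_range {f : E →L[𝕜] F}
    (hker : f.ker.ClosedComplemented) {W : Submodule 𝕜 F} (hW : IsTopCompl f.range W) :
    ∃ g : F →L[𝕜] E, f ∘L g = f.range.projectionL W hW := by
  have := hW.isClosed.completeSpace_coe
  obtain ⟨g, hg⟩ := HasRightInverse.of_surjective_of_closedComplemented_ker
    (f := f.rangeRestrict) (LinearMap.surjective_rangeRestrict _) (by rwa [ker_codRestrict])
  refine ⟨g ∘L f.range.projectionOntoL W hW, ?_⟩
  ext x
  exact congr_arg Subtype.val (hg _)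

end RightInverse

theorem upperTriangular_comp_prod_eq_id {E₁ E₂ : Type*} [NormedAddCommGroup E₁]
    [NormedSpace ℂ E₁] [NormedAddCommGroup E₂] [NormedSpace ℂ E₂] {D₁ : E₁ →L[ℂ] E₁}
    {D₂ : E₂ →L[ℂ] E₂} {A : E₂ →L[ℂ] E₁} {G : E₁ →L[ℂ] E₁} {T : E₁ →L[ℂ] E₂} {S : E₂ →L[ℂ] E₂}
    (hG : D₁ ∘L G + A ∘L T = .id ℂ E₁) (hT : D₂ ∘L T = 0) (hS : D₂ ∘L S = .id ℂ E₂)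
    (hAS : A ∘L S = 0) :
    upperTriangular D₁ D₂ A ∘L ((G ∘L fst ℂ E₁ E₂).prod (T ∘L fst ℂ E₁ E₂ + S ∘L snd ℂ E₁ E₂)) =
      .id ℂ (E₁ × E₂) := by
  ext x
  · simpa [upperTriangular] using congr($hG x)
  · simpa [upperTriangular] using congr($hT x)
  · simpa [upperTriangular] using congr($hAS x)
  · simpa [upperTriangular] using congr($hS x)

/-- Banach space version: if `D₂` is right invertible, `R(D₁)` is closed, `N(D₁)` is
complemented, and a topological complement of `R(D₁)` embeds by a bounded left-invertible
operator into `N(D₂)`, then some completion `[[D₁, A],[0, D₂]]` is right invertible. -/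
theorem stmt18 (D₁ : X₁ →L[ℂ] X₁) (D₂ : X₂ →L[ℂ] X₂)
    (h1 : ∃ S : X₂ →L[ℂ] X₂, D₂.comp S = ContinuousLinearMap.id ℂ X₂)
    (h2 : IsClosed (LinearMap.range (D₁ : X₁ →ₗ[ℂ] X₁) : Set X₁))
    (h3 : ∃ N : Submodule ℂ X₁, IsClosed (N : Set X₁) ∧ IsCompl (LinearMap.ker (D₁ : X₁ →ₗ[ℂ] X₁)) N)
    (h4 : ∃ W : Submodule ℂ X₁, IsClosed (W : Set X₁) ∧ IsCompl (LinearMap.range (D₁ : X₁ →ₗ[ℂ] X₁)) W ∧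
      ∃ J : W →L[ℂ] (LinearMap.ker (D₂ : X₂ →ₗ[ℂ] X₂)), ∃ J' : (LinearMap.ker (D₂ : X₂ →ₗ[ℂ] X₂)) →L[ℂ] W,
        J'.comp J = ContinuousLinearMap.id ℂ W) :
    ∃ A : X₂ →L[ℂ] X₁, ∃ S : (X₁ × X₂) →L[ℂ] (X₁ × X₂),
      (upperTriangular D₁ D₂ A).comp S = ContinuousLinearMap.id ℂ (X₁ × X₂) := by
  obtain ⟨S₀, hS₀⟩ := h1
  obtain ⟨N, hN, hkerN⟩ := h3
  obtain ⟨W, hW, hRWc, J, J', hJ⟩ := h4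
  have hRW : IsTopCompl D₁.range W := hRWc.isTopCompl_of_isClosed h2 hW
  obtain ⟨G, hG⟩ := D₁.exists_comp_eq_projectionL_range
    (.of_isCompl_isClosed hkerN D₁.isClosed_ker hN) hRW
  have hD₂S₀ : RightInverse S₀ D₂ := fun y => congr($hS₀ y)
  have hJ'J : ∀ w, J' (J w) = w := fun w => congr($hJ w)
  refine ⟨W.subtypeL ∘L J' ∘L D₂.projKerOfRightInverse S₀ hD₂S₀, _,
    upperTriangular_comp_prod_eq_id (G := G)
      (T := D₂.ker.subtypeL ∘L J ∘L W.projectionOntoL D₁.range hRW.symm) ?_ ?_ hS₀ ?_⟩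
  · rw [hG, ← projectionL_add_projectionL_eq_id hRW]
    ext x
    simp [hJ'J]
  · ext x
    simp
  · ext y
    simp
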